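/- arXiv:2112.13326 — 11 statements merged into one kernel-verified Lean document; each statement's English description precedes it below -/
import Mathlib

section
/- Let A be an irreducible tridiagonal matrix in Mat_{d+1}(F), S an invertible diagonal matrix, and B = S A S^{-1}. Then the following are equivalent: (i) A_{i,i-1} = B_{i,i-1} for 1 ≤ i ≤ d; (ii) A_{i-1,i} = B_{i-1,i} for 1 ≤ i ≤ d; (iii) A - B is diagonal; (iv) A = B; (v) S_{i,i} = S_{0,0} for 0 ≤ i ≤ d. -/
/-!
Write `S = diagonal s`, so that `B i j = s i * A i j * (s j)⁻¹`. Since the sub- and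
superdiagonal entries of `A` are nonzero, agreement of `A` and `B` at position `(i+1, i)` or
`(i, i+1)` says exactly that `s (i+1) = s i`; by induction on `i` this makes `s` constant, and a
constant `s` commutes with `A`.
-/

open Matrix

theorem Matrix.IsDiag.apply_self_ne_zero {n F : Type*} [Fintype n] [DecidableEq n] [Field F]
    {S : Matrix n n F} (hS : S.IsDiag) (hdet : IsUnit S.det) (i : n) : S i i ≠ 0 := by
  rw [← hS.diagonal_diag, det_diagonal, isUnit_iff_ne_zero, Finset.prod_ne_zero_iff] at hdet
  exact hdet i (Finset.mem_univ i)

theorem Matrix.diagonal_mul_mul_inv_diagonal_apply {n F : Type*} [Fintype n] [DecidableEq n]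
    [Field F] {s : n → F} (hs : ∀ i, s i ≠ 0) (A : Matrix n n F) (i j : n) :
    (diagonal s * A * (diagonal s)⁻¹) i j = s i * A i j * (s j)⁻¹ := by
  have hinv : (diagonal s)⁻¹ = diagonal s⁻¹ :=
    inv_eq_right_inv <| by rw [diagonal_mul_diagonal, ← diagonal_one]; simp [hs]
  rw [hinv, mul_diagonal, diagonal_mul, Pi.inv_apply]

theorem mul_mul_inv_eq_self_iff {F : Type*} [Field F] {a b c : F} (ha : a ≠ 0) (hc : c ≠ 0) :
    b * a * c⁻¹ = a ↔ b = c := by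
  rw [mul_inv_eq_iff_eq_mul₀ hc, mul_comm a c, mul_left_inj' ha]

theorem Fin.eq_apply_zero_of_apply_succ_eq {α : Type*} {d : ℕ} {f : Fin (d + 1) → α}
    (h : ∀ i : Fin d, f i.succ = f i.castSucc) (i : Fin (d + 1)) : f i = f 0 := by
  induction i using Fin.induction with
  | zero => rfl
  | succ i ih => rw [h i, ih]

theorem stmt2_general {F : Type*} [Field F] {d : ℕ}
    (A B S : Matrix (Fin (d+1)) (Fin (d+1)) F)
    (hAirr : ∀ i j, |(i.val:ℤ) - (j.val:ℤ)| = 1 → A i j ≠ 0)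
    (hS : S.IsDiag) (hSinv : IsUnit S.det)
    (hB : B = S * A * S⁻¹) :
    List.TFAE [
      ∀ i : Fin d, A i.succ i.castSucc = B i.succ i.castSucc,
      ∀ i : Fin d, A i.castSucc i.succ = B i.castSucc i.succ,
      (A - B).IsDiag,
      A = B,
      ∀ i, S i i = S 0 0] := by
  have hs : ∀ i, S i i ≠ 0 := hS.apply_self_ne_zero hSinv
  have hBij : ∀ i j, B i j = S i i * A i j * (S j j)⁻¹ := by
    have h := diagonal_mul_mul_inv_diagonal_apply (s := S.diag) hs A
    rw [hS.diagonal_diag, ← hB] at h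
    exact h
  have hsub (i : Fin d) : A i.succ i.castSucc ≠ 0 := hAirr _ _ (by simp)
  have hsup (i : Fin d) : A i.castSucc i.succ ≠ 0 := hAirr _ _ (by simp)
  tfae_have 1 → 5 := fun h ↦ Fin.eq_apply_zero_of_apply_succ_eq (f := S.diag) fun i ↦
    (mul_mul_inv_eq_self_iff (hsub i) (hs _)).1 ((hBij _ _).symm.trans (h i).symm)
  tfae_have 2 → 5 := fun h ↦ Fin.eq_apply_zero_of_apply_succ_eq (f := S.diag) fun i ↦
    ((mul_mul_inv_eq_self_iff (hsup i) (hs _)).1 ((hBij _ _).symm.trans (h i).symm)).symm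
  tfae_have 5 → 4 := fun h ↦ by
    ext i j
    rw [hBij, h i, h j, mul_comm (S 0 0), mul_inv_cancel_right₀ (hs 0)]
  tfae_have 4 → 3 := fun h ↦ by rw [h, sub_self]; exact isDiag_zero
  tfae_have 3 → 1 := fun h i ↦ sub_eq_zero.1 (h Fin.castSucc_lt_succ.ne')
  tfae_have 3 → 2 := fun h i ↦ sub_eq_zero.1 (h Fin.castSucc_lt_succ.ne)
  tfae_finish

/-- For an irreducible tridiagonal matrix A and B = S A S⁻¹ with S
invertible diagonal, five conditions are equivalent. -/
theorem stmt2 {F : Type*} [Field F] {d : ℕ}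
    (A B S : Matrix (Fin (d+1)) (Fin (d+1)) F)
    (hAtri : ∀ i j, (1:ℤ) < |(i.val:ℤ) - (j.val:ℤ)| → A i j = 0)
    (hAirr : ∀ i j, |(i.val:ℤ) - (j.val:ℤ)| = 1 → A i j ≠ 0)
    (hS : S.IsDiag) (hSinv : IsUnit S.det)
    (hB : B = S * A * S⁻¹) :
    List.TFAE [
      ∀ i : Fin d, A i.succ i.castSucc = B i.succ i.castSucc,
      ∀ i : Fin d, A i.castSucc i.succ = B i.castSucc i.succ,
      (A - B).IsDiag,
      A = B,
      ∀ i, S i i = S 0 0] :=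
  stmt2_general A B S hAirr hS hSinv hB
end

section
/- Let A be an irreducible tridiagonal matrix in Mat_{d+1}(F), S an invertible diagonal matrix, and B = S A S^{-1}. Then the following are equivalent: (i) A_{i,i-1} = -B_{i,i-1} for 1 ≤ i ≤ d; (ii) A_{i-1,i} = -B_{i-1,i} for 1 ≤ i ≤ d; (iii) A + B is diagonal; (iv) S_{i,i} = (-1)^i S_{0,0} for 0 ≤ i ≤ d. Moreover, if these hold then (A+B)_{i,i} = 2 A_{i,i} for 0 ≤ i ≤ d. -/
/-!
Write `s i = S i i`. Conjugation by the diagonal matrix `S` gives `B i j = s i * A i j / s j`, so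
`(A + B) i j = A i j * (1 + s i / s j)`. Off the tridiagonal band this vanishes because `A i j`
does; on the band `A i j ≠ 0`, so it vanishes exactly when `s i = -s j`. Hence each of (i), (ii)
and (iii) says that consecutive diagonal entries of `S` are opposite, which is (iv).
-/

open Matrix

section DiagonalConjugation

variable {n F : Type*} [Fintype n] [DecidableEq n] [Field F] {S : Matrix n n F}

lemma Matrix.IsDiag.apply_ne_zero_of_isUnit_det (hS : S.IsDiag) (hdet : IsUnit S.det) (i : n) :
    S i i ≠ 0 := by
  rw [← hS.diagonal_diag, det_diagonal] at hdet
  exact Finset.prod_ne_zero_iff.mp hdet.ne_zero i (Finset.mem_univ i)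

lemma Matrix.IsDiag.inv_eq_diagonal (hS : S.IsDiag) (hdet : IsUnit S.det) :
    S⁻¹ = diagonal fun i => (S i i)⁻¹ := by
  refine inv_eq_right_inv ?_
  nth_rw 1 [← hS.diagonal_diag]
  rw [diagonal_mul_diagonal, ← diagonal_one]
  exact congrArg diagonal (funext fun i => mul_inv_cancel₀ (hS.apply_ne_zero_of_isUnit_det hdet i))

lemma Matrix.IsDiag.mul_mul_inv_apply (hS : S.IsDiag) (hdet : IsUnit S.det)
    (A : Matrix n n F) (i j : n) :
    (S * A * S⁻¹) i j = S i i * A i j / S j j := by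
  rw [hS.inv_eq_diagonal hdet]
  nth_rw 1 [← hS.diagonal_diag]
  rw [mul_diagonal, diagonal_mul, div_eq_mul_inv, diag_apply]

end DiagonalConjugation

lemma add_mul_div_eq_zero_iff {F : Type*} [Field F] {a x y : F} (hy : y ≠ 0) :
    a + x * a / y = 0 ↔ a = 0 ∨ x = -y := by
  rw [show a + x * a / y = a * (y + x) / y by field_simp, div_eq_zero_iff, mul_eq_zero,
    add_comm, add_eq_zero_iff_eq_neg]
  simp [hy]

lemma Fin.forall_eq_neg_one_pow_mul_iff {M : Type*} [Ring M] {d : ℕ} (s : Fin (d + 1) → M) :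
    (∀ i, s i = (-1 : M) ^ (i : ℕ) * s 0) ↔ ∀ k : Fin d, s k.succ = -s k.castSucc := by
  constructor
  · intro h k
    rw [h k.succ, h k.castSucc, Fin.val_succ, Fin.val_castSucc, pow_succ]
    noncomm_ring
  · intro h i
    induction i using Fin.induction with
    | zero => simp
    | succ k ih =>
      rw [h k, ih, Fin.val_succ, Fin.val_castSucc, pow_succ]
      noncomm_ring

lemma Matrix.isDiag_iff_of_tridiagonal {α : Type*} [Zero α] {d : ℕ}
    {M : Matrix (Fin (d + 1)) (Fin (d + 1)) α}
    (hM : ∀ i j, (1 : ℤ) < |(i.val : ℤ) - (j.val : ℤ)| → M i j = 0) :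
    M.IsDiag ↔ ∀ k : Fin d, M k.succ k.castSucc = 0 ∧ M k.castSucc k.succ = 0 := by
  refine ⟨fun h k => ⟨h Fin.castSucc_lt_succ.ne', h Fin.castSucc_lt_succ.ne⟩,
    fun h i j hij => ?_⟩
  by_cases hfar : (1 : ℤ) < |(i.val : ℤ) - (j.val : ℤ)|
  · exact hM i j hfar
  have hadjacent : i.val = j.val + 1 ∨ j.val = i.val + 1 := by
    have := Fin.val_ne_of_ne hij
    rw [not_lt, abs_le] at hfar
    omega
  rcases hadjacent with hi | hj
  · obtain ⟨k, rfl, rfl⟩ : ∃ k : Fin d, i = k.succ ∧ j = k.castSucc :=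
      ⟨⟨j, by omega⟩, Fin.ext (by simp [hi]), rfl⟩
    exact (h k).1
  · obtain ⟨k, rfl, rfl⟩ : ∃ k : Fin d, i = k.castSucc ∧ j = k.succ :=
      ⟨⟨i, by omega⟩, rfl, Fin.ext (by simp [hj])⟩
    exact (h k).2

/-- For an irreducible tridiagonal matrix A and B = S A S⁻¹ with S
invertible diagonal, four conditions are equivalent; moreover if they hold then
A + B has (i,i)-entry 2 A_{i,i}. -/
theorem stmt4 {F : Type*} [Field F] {d : ℕ}
    (A B S : Matrix (Fin (d+1)) (Fin (d+1)) F)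
    (hAtri : ∀ i j, (1:ℤ) < |(i.val:ℤ) - (j.val:ℤ)| → A i j = 0)
    (hAirr : ∀ i j, |(i.val:ℤ) - (j.val:ℤ)| = 1 → A i j ≠ 0)
    (hS : S.IsDiag) (hSinv : IsUnit S.det)
    (hB : B = S * A * S⁻¹) :
    List.TFAE [
      ∀ i : Fin d, A i.succ i.castSucc = - B i.succ i.castSucc,
      ∀ i : Fin d, A i.castSucc i.succ = - B i.castSucc i.succ,
      (A + B).IsDiag,
      ∀ i, S i i = (-1 : F)^(i:ℕ) * S 0 0] ∧
    ((A + B).IsDiag → ∀ i, (A + B) i i = 2 * A i i) := by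
  have hsum (i j) : (A + B) i j = A i j + S i i * A i j / S j j := by
    rw [Matrix.add_apply, hB, hS.mul_mul_inv_apply hSinv]
  have hfar (i j) (h : (1:ℤ) < |(i.val:ℤ) - (j.val:ℤ)|) : (A + B) i j = 0 := by
    rw [hsum, hAtri i j h, mul_zero, zero_div, add_zero]
  have hadj (i j) (h : |(i.val:ℤ) - (j.val:ℤ)| = 1) : (A + B) i j = 0 ↔ S i i = -S j j := by
    rw [hsum, add_mul_div_eq_zero_iff (hS.apply_ne_zero_of_isUnit_det hSinv j),
      or_iff_right (hAirr i j h)]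
  have hlower : (∀ k : Fin d, (A + B) k.succ k.castSucc = 0) ↔
      ∀ k : Fin d, S k.succ k.succ = -S k.castSucc k.castSucc :=
    forall_congr' fun k => hadj _ _ (by simp)
  have hupper : (∀ k : Fin d, (A + B) k.castSucc k.succ = 0) ↔
      ∀ k : Fin d, S k.succ k.succ = -S k.castSucc k.castSucc :=
    forall_congr' fun k => (hadj _ _ (by simp)).trans (eq_comm.trans neg_eq_iff_eq_neg)
  have hsign := (Fin.forall_eq_neg_one_pow_mul_iff fun i => S i i).symm
  have hdiag (i) : (A + B) i i = 2 * A i i := by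
    rw [hsum, mul_div_cancel_left₀ _ (hS.apply_ne_zero_of_isUnit_det hSinv i), two_mul]
  refine ⟨?_, fun _ => hdiag⟩
  tfae_have 1 ↔ 4 := by
    simp only [eq_neg_iff_add_eq_zero, ← Matrix.add_apply]
    exact hlower.trans hsign
  tfae_have 2 ↔ 4 := by
    simp only [eq_neg_iff_add_eq_zero, ← Matrix.add_apply]
    exact hupper.trans hsign
  tfae_have 3 ↔ 4 := by
    rw [isDiag_iff_of_tridiagonal hfar, forall_and, hlower, hupper, and_self]
    exact hsign
  tfae_finish
end

section
/- Let (θ_i)_{i=0}^d; (θ*_i)_{i=0}^d; (φ_i)_{i=1}^d; (ϕ_i)_{i=1}^d be a parameter array over F. Then: φ_1 - ϕ_1 = (θ*_1 - θ*_0)(θ_0 - θ_d), φ_d - ϕ_1 = (θ*_d - θ*_0)(θ_{d-1} - θ_d), and ϕ_d - φ_1 = (θ*_d - θ*_0)(θ_1 - θ_0). -/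
/-
The sums `∑_{ℓ<i} (θ_ℓ - θ_{d-ℓ}) / (θ_0 - θ_d)` in conditions (iii) and (iv) equal `1` both
for `i = 1` (trivially) and for `i = d` (by telescoping). Substituting these values into (iii)
at `i = 1`, `i = d` and into (iv) at `i = d` gives the three identities.
-/

/-- A parameter array over `F` of diameter `d`: conditions (i)--(v) of the Leonard
system classification. -/
def IsParamArray (F : Type*) [Field F] (d : ℕ) (θ θs φ ϕ : ℕ → F) : Prop :=
  (∀ i ≤ d, ∀ j ≤ d, i ≠ j → θ i ≠ θ j ∧ θs i ≠ θs j) ∧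
  (∀ i, 1 ≤ i → i ≤ d → φ i ≠ 0 ∧ ϕ i ≠ 0) ∧
  (∀ i, 1 ≤ i → i ≤ d →
    φ i = ϕ 1 * (∑ l ∈ Finset.range i, (θ l - θ (d - l)) / (θ 0 - θ d))
      + (θs i - θs 0) * (θ (i-1) - θ d)) ∧
  (∀ i, 1 ≤ i → i ≤ d →
    ϕ i = φ 1 * (∑ l ∈ Finset.range i, (θ l - θ (d - l)) / (θ 0 - θ d))
      + (θs i - θs 0) * (θ (d - i + 1) - θ 0)) ∧
  (∀ i, 2 ≤ i → i ≤ d - 1 →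
    (θ (i-2) - θ (i+1)) / (θ (i-1) - θ i) = (θs (i-2) - θs (i+1)) / (θs (i-1) - θs i) ∧
    ∀ j, 2 ≤ j → j ≤ d - 1 →
      (θ (i-2) - θ (i+1)) / (θ (i-1) - θ i) = (θ (j-2) - θ (j+1)) / (θ (j-1) - θ j))

open Finset

theorem sum_range_sub_reflect {M : Type*} [AddCommGroup M] (f : ℕ → M) (d : ℕ) :
    ∑ l ∈ range d, (f l - f (d - l)) = f 0 - f d := by
  have hreflect : ∑ l ∈ range d, f (d - l) = ∑ l ∈ range d, f (l + 1) := by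
    rw [← sum_range_reflect (fun l => f (l + 1)) d]
    refine sum_congr rfl fun l hl => congrArg f ?_
    have := mem_range.mp hl
    omega
  rw [sum_sub_distrib, hreflect, ← sum_sub_distrib, sum_range_sub']

theorem sum_range_sub_reflect_div_eq_one {F : Type*} [Field F] (θ : ℕ → F) {d : ℕ}
    (h : θ 0 ≠ θ d) : ∑ l ∈ range d, (θ l - θ (d - l)) / (θ 0 - θ d) = 1 := by
  rw [← sum_div, sum_range_sub_reflect, div_self (sub_ne_zero.mpr h)]

namespace IsParamArray

variable {F : Type*} [Field F] {d : ℕ} {θ θs φ ϕ : ℕ → F}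

theorem theta_zero_ne_theta_last (hd : 1 ≤ d) (hpa : IsParamArray F d θ θs φ ϕ) :
    θ 0 ≠ θ d :=
  (hpa.1 0 d.zero_le d le_rfl (by omega)).1

theorem phi_one_sub_varphi_one (hd : 1 ≤ d) (hpa : IsParamArray F d θ θs φ ϕ) :
    φ 1 - ϕ 1 = (θs 1 - θs 0) * (θ 0 - θ d) := by
  have hsum : ∑ l ∈ range 1, (θ l - θ (d - l)) / (θ 0 - θ d) = 1 := by
    rw [sum_range_one, Nat.sub_zero,
      div_self (sub_ne_zero.mpr (hpa.theta_zero_ne_theta_last hd))]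
  rw [hpa.2.2.1 1 le_rfl hd, hsum]
  ring

theorem phi_last_sub_varphi_one (hd : 1 ≤ d) (hpa : IsParamArray F d θ θs φ ϕ) :
    φ d - ϕ 1 = (θs d - θs 0) * (θ (d - 1) - θ d) := by
  rw [hpa.2.2.1 d hd le_rfl,
    sum_range_sub_reflect_div_eq_one θ (hpa.theta_zero_ne_theta_last hd)]
  ring

theorem varphi_last_sub_phi_one (hd : 1 ≤ d) (hpa : IsParamArray F d θ θs φ ϕ) :
    ϕ d - φ 1 = (θs d - θs 0) * (θ 1 - θ 0) := by
  rw [hpa.2.2.2.1 d hd le_rfl,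
    sum_range_sub_reflect_div_eq_one θ (hpa.theta_zero_ne_theta_last hd),
    Nat.sub_self, Nat.zero_add]
  ring

end IsParamArray

/-- basic relations among φ₁, ϕ₁, φ_d, ϕ_d for a parameter array. -/
theorem stmt8 {F : Type*} [Field F] {d : ℕ} (hd : 1 ≤ d)
    (θ θs φ ϕ : ℕ → F) (hpa : IsParamArray F d θ θs φ ϕ) :
    φ 1 - ϕ 1 = (θs 1 - θs 0) * (θ 0 - θ d) ∧
    φ d - ϕ 1 = (θs d - θs 0) * (θ (d-1) - θ d) ∧
    ϕ d - φ 1 = (θs d - θs 0) * (θ 1 - θ 0) :=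
  ⟨hpa.phi_one_sub_varphi_one hd, hpa.phi_last_sub_varphi_one hd,
    hpa.varphi_last_sub_phi_one hd⟩
end

section
/- Let (θ_i)_{i=0}^d; (θ*_i)_{i=0}^d; (φ_i)_{i=1}^d; (ϕ_i)_{i=1}^d be a parameter array over F. Then (θ_ℓ - θ_{d-ℓ})/(θ_0 - θ_d) = (θ*_ℓ - θ*_{d-ℓ})/(θ*_0 - θ*_d) for 0 ≤ ℓ ≤ d. -/
def SatisfiesRecurrence {R : Type*} [CommRing R] (β : R) (n : ℕ) (a : ℕ → R) : Prop :=
  ∀ j, j + 2 < n → a (j + 2) = β * a (j + 1) - a j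

def crossDet {R : Type*} [CommRing R] (a b : ℕ → R) (i j : ℕ) : R :=
  a i * b j - a j * b i

namespace SatisfiesRecurrence

variable {R : Type*} [CommRing R] {β : R} {n : ℕ} {a b : ℕ → R}

lemma crossDet_right (ha : SatisfiesRecurrence β n a) (hb : SatisfiesRecurrence β n b)
    (i : ℕ) {j : ℕ} (hj : j + 2 < n) :
    crossDet a b i (j + 2) = β * crossDet a b i (j + 1) - crossDet a b i j := by
  simp only [crossDet, ha j hj, hb j hj]
  ring

lemma crossDet_left (ha : SatisfiesRecurrence β n a) (hb : SatisfiesRecurrence β n b)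
    {j : ℕ} (hj : j + 2 < n) (k : ℕ) :
    crossDet a b j k = β * crossDet a b (j + 1) k - crossDet a b (j + 2) k := by
  simp only [crossDet, ha j hj, hb j hj]
  ring

lemma crossDet_succ (ha : SatisfiesRecurrence β n a) (hb : SatisfiesRecurrence β n b) :
    ∀ j, j + 1 < n → crossDet a b j (j + 1) = crossDet a b 0 1
  | 0, _ => rfl
  | j + 1, hj => by
    rw [crossDet_right ha hb (j + 1) hj, ← crossDet_succ ha hb j (by omega)]
    simp only [crossDet]
    ring

lemma crossDet_reflect (ha : SatisfiesRecurrence β n a) (hb : SatisfiesRecurrence β n b) :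
    ∀ m i k, i + m + k + 1 = n → crossDet a b i (i + m) = crossDet a b k (k + m)
  | 0, i, k, _ => by simp only [crossDet, add_zero, sub_self]
  | 1, i, k, h => by
    rw [crossDet_succ ha hb i (by omega), crossDet_succ ha hb k (by omega)]
  | m + 2, i, k, h => by
    have ih₁ := crossDet_reflect ha hb (m + 1) i (k + 1) (by omega)
    have ih₀ := crossDet_reflect ha hb m i (k + 2) (by omega)
    rw [show k + 1 + (m + 1) = k + (m + 2) by omega] at ih₁
    rw [show k + 2 + m = k + (m + 2) by omega] at ih₀
    calc crossDet a b i (i + (m + 2))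
        = β * crossDet a b i (i + (m + 1)) - crossDet a b i (i + m) :=
          crossDet_right ha hb i (j := i + m) (by omega)
      _ = β * crossDet a b (k + 1) (k + (m + 2)) - crossDet a b (k + 2) (k + (m + 2)) := by
          rw [ih₁, ih₀]
      _ = crossDet a b k (k + (m + 2)) := (crossDet_left ha hb (by omega) _).symm

lemma crossDet_add_crossDet_reflect (ha : SatisfiesRecurrence β n a)
    (hb : SatisfiesRecurrence β n b) {i j : ℕ} (hi : i < n) (hj : j < n) :
    crossDet a b i j + crossDet a b (n - 1 - i) (n - 1 - j) = 0 := by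
  rcases le_total i j with hij | hji
  · have h := crossDet_reflect ha hb (j - i) i (n - 1 - j) (by omega)
    rw [show i + (j - i) = j by omega, show n - 1 - j + (j - i) = n - 1 - i by omega] at h
    simp only [crossDet] at h ⊢
    linear_combination h
  · have h := crossDet_reflect ha hb (i - j) j (n - 1 - i) (by omega)
    rw [show j + (i - j) = i by omega, show n - 1 - i + (i - j) = n - 1 - j by omega] at h
    simp only [crossDet] at h ⊢
    linear_combination -h

lemma sum_crossDet_middle_outer (ha : SatisfiesRecurrence β n a)
    (hb : SatisfiesRecurrence β n b) (l : ℕ) :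
    ∑ p ∈ Finset.Ico l (n - l) ×ˢ (Finset.range n \ Finset.Ico l (n - l)),
      crossDet a b p.1 p.2 = 0 := by
  refine Finset.sum_involution (fun p _ => (n - 1 - p.1, n - 1 - p.2)) ?_ ?_ ?_ ?_ <;>
    simp only [Finset.mem_product, Finset.mem_sdiff, Finset.mem_range, Finset.mem_Ico]
  · intro p hp
    exact crossDet_add_crossDet_reflect ha hb (by omega) (by omega)
  · intro p hp _ hfix
    rw [Prod.ext_iff] at hfix
    omega
  · intro p hp
    omega
  · intro p hp
    ext <;> dsimp only <;> omega

lemma sum_middle_mul_sum_comm (ha : SatisfiesRecurrence β n a)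
    (hb : SatisfiesRecurrence β n b) (l : ℕ) :
    (∑ t ∈ Finset.Ico l (n - l), a t) * ∑ t ∈ Finset.range n, b t
      = (∑ t ∈ Finset.Ico l (n - l), b t) * ∑ t ∈ Finset.range n, a t := by
  classical
  have hsub : Finset.Ico l (n - l) ⊆ Finset.range n := by
    intro t
    simp only [Finset.mem_Ico, Finset.mem_range]
    omega
  have h := sum_crossDet_middle_outer ha hb l
  simp only [crossDet, Finset.sum_product, Finset.sum_sub_distrib, ← Finset.mul_sum,
    ← Finset.sum_mul] at h
  rw [← Finset.sum_sdiff hsub (f := a), ← Finset.sum_sdiff hsub (f := b)]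
  linear_combination h

end SatisfiesRecurrence

section

variable {R : Type*} [CommRing R]

lemma satisfiesRecurrence_sub (γ : R) {n : ℕ} {x : ℕ → R}
    (h : ∀ j, j + 3 ≤ n → x j - x (j + 3) = γ * (x (j + 1) - x (j + 2))) :
    SatisfiesRecurrence (γ - 1) n (fun j => x (j + 1) - x j) := by
  intro j hj
  linear_combination -h j (by omega)

lemma sub_mul_sub_comm_of_satisfiesRecurrence {β : R} {n : ℕ} {x y : ℕ → R}
    (hx : SatisfiesRecurrence β n (fun j => x (j + 1) - x j))
    (hy : SatisfiesRecurrence β n (fun j => y (j + 1) - y j)) {l : ℕ} (hl : l ≤ n) :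
    (x (n - l) - x l) * (y n - y 0) = (y (n - l) - y l) * (x n - x 0) := by
  have key : ∀ m, m + m ≤ n →
      (x (n - m) - x m) * (y n - y 0) = (y (n - m) - y m) * (x n - x 0) := by
    intro m hm
    have h := hx.sum_middle_mul_sum_comm hy m
    rwa [Finset.sum_Ico_sub x (by omega), Finset.sum_Ico_sub y (by omega),
      Finset.sum_range_sub x, Finset.sum_range_sub y] at h
  rcases le_total (l + l) n with hl' | hl'
  · exact key l hl'
  · have h := key (n - l) (by omega)
    rw [Nat.sub_sub_self hl] at h
    linear_combination -h

end

lemma IsParamArray.satisfiesRecurrence {F : Type*} [Field F] {d : ℕ} {θ θs φ ϕ : ℕ → F}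
    (hpa : IsParamArray F d θ θs φ ϕ) :
    SatisfiesRecurrence ((θ 0 - θ 3) / (θ 1 - θ 2) - 1) d (fun j => θ (j + 1) - θ j) ∧
      SatisfiesRecurrence ((θ 0 - θ 3) / (θ 1 - θ 2) - 1) d (fun j => θs (j + 1) - θs j) := by
  obtain ⟨hdist, -, -, -, hβ⟩ := hpa
  have hθ (j : ℕ) (hj : j + 3 ≤ d) :
      (θ j - θ (j + 3)) / (θ (j + 1) - θ (j + 2)) = (θ 0 - θ 3) / (θ 1 - θ 2) :=
    (hβ (j + 2) (by omega) (by omega)).2 2 le_rfl (by omega)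
  have hθs (j : ℕ) (hj : j + 3 ≤ d) :
      (θs j - θs (j + 3)) / (θs (j + 1) - θs (j + 2)) = (θ 0 - θ 3) / (θ 1 - θ 2) :=
    (hβ (j + 2) (by omega) (by omega)).1.symm.trans (hθ j hj)
  have hne (j : ℕ) (hj : j + 3 ≤ d) := hdist (j + 1) (by omega) (j + 2) (by omega) (by omega)
  exact ⟨satisfiesRecurrence_sub _ fun j hj =>
      (div_eq_iff (sub_ne_zero.mpr (hne j hj).1)).mp (hθ j hj),
    satisfiesRecurrence_sub _ fun j hj =>
      (div_eq_iff (sub_ne_zero.mpr (hne j hj).2)).mp (hθs j hj)⟩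

/-- the ratio identity relating the eigenvalue and dual eigenvalue
sequences of a parameter array. -/
theorem stmt10 {F : Type*} [Field F] {d : ℕ} (hd : 1 ≤ d)
    (θ θs φ ϕ : ℕ → F) (hpa : IsParamArray F d θ θs φ ϕ) :
    ∀ l ≤ d, (θ l - θ (d - l)) / (θ 0 - θ d) = (θs l - θs (d - l)) / (θs 0 - θs d) := by
  intro l hl
  obtain ⟨hθ, hθs⟩ := hpa.satisfiesRecurrence
  have hne := hpa.1 0 (Nat.zero_le d) d le_rfl (by omega)
  rw [div_eq_div_iff (sub_ne_zero.mpr hne.1) (sub_ne_zero.mpr hne.2)]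
  linear_combination sub_mul_sub_comm_of_satisfiesRecurrence hθ hθs hl
end

section
/- Let (θ_i); (θ*_i); (φ_i); (ϕ_i) and (θ'_i); (θ*_i); (φ'_i); (ϕ'_i) be two parameter arrays over F with the same dual eigenvalue sequence (θ*_i). If φ'_i = φ_i and ϕ'_i = ϕ_i for 1 ≤ i ≤ d, then there exists ζ ∈ F such that θ'_i = θ_i + ζ for 0 ≤ i ≤ d. -/
open Finset

theorem eq_zero_of_split_relations {F : Type*} [Field F] {d : ℕ} {a b : F} {γ ε : ℕ → F}
    (hb : b = a + γ 1) (hγ : ∀ i, 1 ≤ i → i ≤ d → γ i ≠ 0)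
    (hγ1 : ∀ i, 2 ≤ i → i ≤ d → γ i ≠ γ 1) (h0 : ε 0 = 0) (hd : ε d = 0)
    (hA : ∀ i, 1 ≤ i → i ≤ d → a * ∑ l ∈ range i, (ε l - ε (d - l)) = -(γ i * ε (i - 1)))
    (hB : ∀ i, 1 ≤ i → i ≤ d → b * ∑ l ∈ range i, (ε l - ε (d - l)) = -(γ i * ε (d - i + 1))) :
    ∀ i ≤ d, ε i = 0 := by
  have hsym : ∀ i, 1 ≤ i → i ≤ d → b * ε (i - 1) = a * ε (d - i + 1) := fun i h1 h2 =>
    mul_left_cancel₀ (hγ i h1 h2) (by linear_combination b * hA i h1 h2 - a * hB i h1 h2)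
  have hrec : ∀ i, 1 ≤ i → i + 1 ≤ d → (γ (i + 1) - γ 1) * ε i = γ i * ε (i - 1) := by
    intro i h1 h2
    have hA' := hA (i + 1) (by omega) h2
    have hsym' := hsym (i + 1) (by omega) h2
    rw [sum_range_succ, Nat.add_sub_cancel] at hA'
    rw [Nat.add_sub_cancel, show d - (i + 1) + 1 = d - i by omega] at hsym'
    linear_combination hA' - hA i h1 (by omega) - hsym' + ε i * hb
  have hlt : ∀ i, i < d → ε i = 0 := by
    intro i
    induction i with
    | zero => exact fun _ => h0
    | succ n ih =>
      intro hn
      have hr := hrec (n + 1) (by omega) hn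
      rw [Nat.add_sub_cancel, ih (by omega), mul_zero] at hr
      exact (mul_eq_zero.mp hr).resolve_left (sub_ne_zero.mpr (hγ1 (n + 2) (by omega) hn))
  intro i hi
  rcases hi.lt_or_eq with hi | rfl
  · exact hlt i hi
  · exact hd

namespace IsParamArray

variable {F : Type*} [Field F] {d : ℕ} {θ θs φ ϕ : ℕ → F}

theorem congr_split {ψ χ : ℕ → F} (h : IsParamArray F d θ θs φ ϕ)
    (hφ : ∀ i, 1 ≤ i → i ≤ d → φ i = ψ i) (hϕ : ∀ i, 1 ≤ i → i ≤ d → ϕ i = χ i) :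
    IsParamArray F d θ θs ψ χ := by
  obtain ⟨hdist, hnz, hiii, hiv, hv⟩ := h
  refine ⟨hdist, fun i h1 h2 => ?_, fun i h1 h2 => ?_, fun i h1 h2 => ?_, hv⟩
  · rw [← hφ i h1 h2, ← hϕ i h1 h2]
    exact hnz i h1 h2
  · rw [← hφ i h1 h2, ← hϕ 1 le_rfl (h1.trans h2)]
    exact hiii i h1 h2
  · rw [← hϕ i h1 h2, ← hφ 1 le_rfl (h1.trans h2)]
    exact hiv i h1 h2

theorem eigenvalue_zero_sub_ne_zero (h : IsParamArray F d θ θs φ ϕ) (hd : d ≠ 0) :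
    θ 0 - θ d ≠ 0 :=
  sub_ne_zero.mpr (h.1 0 (Nat.zero_le d) d le_rfl hd.symm).1

theorem dualEigenvalue_ne (h : IsParamArray F d θ θs φ ϕ) {i j : ℕ} (hi : i ≤ d) (hj : j ≤ d)
    (hij : i ≠ j) : θs i ≠ θs j :=
  (h.1 i hi j hj hij).2

theorem mul_firstSplit_eq (h : IsParamArray F d θ θs φ ϕ) {i : ℕ} (h1 : 1 ≤ i) (h2 : i ≤ d) :
    (θ 0 - θ d) * φ i = ϕ 1 * ∑ l ∈ range i, (θ l - θ (d - l))
      + (θ 0 - θ d) * (θs i - θs 0) * (θ (i - 1) - θ d) := by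
  have hD := h.eigenvalue_zero_sub_ne_zero (by omega)
  rw [h.2.2.1 i h1 h2, ← sum_div]
  field_simp

theorem mul_secondSplit_eq (h : IsParamArray F d θ θs φ ϕ) {i : ℕ} (h1 : 1 ≤ i) (h2 : i ≤ d) :
    (θ 0 - θ d) * ϕ i = φ 1 * ∑ l ∈ range i, (θ l - θ (d - l))
      + (θ 0 - θ d) * (θs i - θs 0) * (θ (d - i + 1) - θ 0) := by
  have hD := h.eigenvalue_zero_sub_ne_zero (by omega)
  rw [h.2.2.2.1 i h1 h2, ← sum_div]
  field_simp

theorem firstSplit_one (h : IsParamArray F d θ θs φ ϕ) (hd : 1 ≤ d) :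
    φ 1 = ϕ 1 + (θs 1 - θs 0) * (θ 0 - θ d) := by
  have h1 := h.mul_firstSplit_eq le_rfl hd
  rw [sum_range_one, Nat.sub_zero] at h1
  refine mul_left_cancel₀ (h.eigenvalue_zero_sub_ne_zero (by omega)) ?_
  linear_combination h1

variable {θ' : ℕ → F}

theorem sub_eq_of_split_eq (h : IsParamArray F d θ θs φ ϕ) (h' : IsParamArray F d θ' θs φ ϕ)
    (hd : 1 ≤ d) : θ' 0 - θ' d = θ 0 - θ d :=
  mul_left_cancel₀ (sub_ne_zero.mpr (h.dualEigenvalue_ne hd (Nat.zero_le d) one_ne_zero))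
    (by linear_combination h.firstSplit_one hd - h'.firstSplit_one hd)

theorem exists_eq_add_of_split_eq (h : IsParamArray F d θ θs φ ϕ)
    (h' : IsParamArray F d θ' θs φ ϕ) (hd : 1 ≤ d) : ∃ ζ : F, ∀ i ≤ d, θ' i = θ i + ζ := by
  have hD := h.sub_eq_of_split_eq h' hd
  have hD0 := h.eigenvalue_zero_sub_ne_zero (by omega)
  set ε : ℕ → F := fun i => θ' i - θ i - (θ' 0 - θ 0)
  have hsum : ∀ i, ∑ l ∈ range i, (ε l - ε (d - l))
      = ∑ l ∈ range i, (θ' l - θ' (d - l)) - ∑ l ∈ range i, (θ l - θ (d - l)) := by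
    intro i
    rw [← sum_sub_distrib]
    exact sum_congr rfl fun l _ => by ring
  have hε := eq_zero_of_split_relations (a := ϕ 1) (b := φ 1)
    (γ := fun i => (θ 0 - θ d) * (θs i - θs 0)) (ε := ε) (by linear_combination h.firstSplit_one hd)
    (fun i h1 h2 => mul_ne_zero hD0
      (sub_ne_zero.mpr (h.dualEigenvalue_ne h2 (Nat.zero_le d) (by omega))))
    (fun i h1 h2 heq => h.dualEigenvalue_ne h2 hd (by omega)
      (by simpa using mul_left_cancel₀ hD0 heq))
    (by simp [ε]) (by linear_combination -hD)
    (fun i h1 h2 => by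
      rw [hsum]
      linear_combination h.mul_firstSplit_eq h1 h2 - h'.mul_firstSplit_eq h1 h2
        + (φ i - (θs i - θs 0) * (θ' (i - 1) - θ' d + θ 0 - θ d)) * hD)
    (fun i h1 h2 => by
      rw [hsum]
      linear_combination h.mul_secondSplit_eq h1 h2 - h'.mul_secondSplit_eq h1 h2
        + (ϕ i - (θs i - θs 0) * (θ' (d - i + 1) - θ' 0)) * hD)
  exact ⟨θ' 0 - θ 0, fun i hi => by linear_combination hε i hi⟩

end IsParamArray

/-- two parameter arrays with the same dual eigenvalue sequence and the
same split sequences have eigenvalue sequences differing by a constant. -/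
theorem stmt11 {F : Type*} [Field F] {d : ℕ} (hd : 1 ≤ d)
    (θ θ' θs φ ϕ φ' ϕ' : ℕ → F)
    (hpa : IsParamArray F d θ θs φ ϕ)
    (hpa' : IsParamArray F d θ' θs φ' ϕ')
    (hφ : ∀ i, 1 ≤ i → i ≤ d → φ' i = φ i)
    (hϕ : ∀ i, 1 ≤ i → i ≤ d → ϕ' i = ϕ i) :
    ∃ ζ : F, ∀ i ≤ d, θ' i = θ i + ζ :=
  hpa.exists_eq_add_of_split_eq (hpa'.congr_split hφ hϕ) hd
end

section
/- Let (θ_i); (θ*_i); (φ_i); (ϕ_i) and (θ'_i); (θ*_i); (φ'_i); (ϕ'_i) be two parameter arrays over F with the same dual eigenvalue sequence. If φ'_i = ϕ_i and ϕ'_i = φ_i for 1 ≤ i ≤ d, then there exists ζ ∈ F such that θ'_i = θ_{d-i} + ζ for 0 ≤ i ≤ d. -/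
/-!
Let `S` be the recurrences (iii)–(iv), which express `φ`, `ϕ` through `θ`, `θ*`. Replacing `θ i` by
`θ (d - i) + ζ` preserves `S` with `φ` and `ϕ` interchanged, so `θ'` and `i ↦ θ (d - i) + ζ`, for
`ζ = θ' 0 - θ d`, satisfy `S` with the same data and agree at `0`. And `S` determines `θ` from
`θ 0`: at `i = 1` it fixes `θ d`, and at `i + 1` it is a linear system in `θ i`, `θ (d - i)` whose
determinant is a nonzero multiple of `(θ* (i + 1) - θ* 0) (θ* (i + 1) - θ* 1)`.
-/

open Finset

/-- The paper's `ϑ i`. -/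
def eigenSum {F : Type*} [Field F] (d : ℕ) (θ : ℕ → F) (i : ℕ) : F :=
  ∑ l ∈ range i, (θ l - θ (d - l)) / (θ 0 - θ d)

def SplitRecurrences {F : Type*} [Field F] (d : ℕ) (θ θs φ ϕ : ℕ → F) : Prop :=
  (∀ i, 1 ≤ i → i ≤ d →
    φ i = ϕ 1 * eigenSum d θ i + (θs i - θs 0) * (θ (i - 1) - θ d)) ∧
  (∀ i, 1 ≤ i → i ≤ d →
    ϕ i = φ 1 * eigenSum d θ i + (θs i - θs 0) * (θ (d - i + 1) - θ 0))

section

variable {F : Type*} [Field F] {d : ℕ}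

theorem IsParamArray.splitRecurrences {θ θs φ ϕ : ℕ → F} (h : IsParamArray F d θ θs φ ϕ) :
    SplitRecurrences d θ θs φ ϕ :=
  ⟨h.2.2.1, h.2.2.2.1⟩

theorem IsParamArray.apply_zero_ne_apply_diam {θ θs φ ϕ : ℕ → F}
    (h : IsParamArray F d θ θs φ ϕ) (hd : 1 ≤ d) : θ 0 ≠ θ d :=
  (h.1 0 d.zero_le d le_rfl (by omega)).1

theorem eigenSum_one {θ : ℕ → F} (h : θ 0 ≠ θ d) : eigenSum d θ 1 = 1 := by
  simp [eigenSum, div_self (sub_ne_zero.mpr h)]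

theorem eigenSum_reverse_add (θ : ℕ → F) (ζ : F) {i : ℕ} (hi : i ≤ d) :
    eigenSum d (fun j => θ (d - j) + ζ) i = eigenSum d θ i := by
  refine sum_congr rfl fun l hl => ?_
  beta_reduce
  rw [Nat.sub_sub_self (by grind), Nat.sub_zero, Nat.sub_self, ← neg_div_neg_eq]
  congr 1 <;> ring

theorem eigenSum_sub_eigenSum {θ ψ : ℕ → F} (h : θ 0 - θ d = ψ 0 - ψ d) (i : ℕ) :
    eigenSum d θ i - eigenSum d ψ i =
      (∑ l ∈ range i, ((θ - ψ) l - (θ - ψ) (d - l))) / (θ 0 - θ d) := by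
  simp only [eigenSum, ← h, ← sum_sub_distrib, sum_div, Pi.sub_apply, ← sub_div]
  congr! 2
  ring

namespace SplitRecurrences

variable {θ ψ θs φ ϕ : ℕ → F}

theorem of_eqOn {φ' ϕ' : ℕ → F} (h : SplitRecurrences d θ θs φ ϕ)
    (hφ : ∀ i, 1 ≤ i → i ≤ d → φ i = φ' i) (hϕ : ∀ i, 1 ≤ i → i ≤ d → ϕ i = ϕ' i) :
    SplitRecurrences d θ θs φ' ϕ' := by
  refine ⟨fun i h1 hi => ?_, fun i h1 hi => ?_⟩
  · rw [← hφ i h1 hi, ← hϕ 1 le_rfl (h1.trans hi)]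
    exact h.1 i h1 hi
  · rw [← hϕ i h1 hi, ← hφ 1 le_rfl (h1.trans hi)]
    exact h.2 i h1 hi

theorem reverse_add (h : SplitRecurrences d θ θs φ ϕ) (ζ : F) :
    SplitRecurrences d (fun j => θ (d - j) + ζ) θs ϕ φ := by
  refine ⟨fun i h1 hi => ?_, fun i h1 hi => ?_⟩ <;> beta_reduce <;>
    rw [eigenSum_reverse_add θ ζ hi]
  · rw [h.2 i h1 hi, show d - (i - 1) = d - i + 1 by omega, Nat.sub_self]
    ring
  · rw [h.1 i h1 hi, show d - (d - i + 1) = i - 1 by omega, Nat.sub_zero]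
    ring

theorem split_one (h : SplitRecurrences d θ θs φ ϕ) (hθ : θ 0 ≠ θ d) :
    φ 1 = ϕ 1 + (θs 1 - θs 0) * (θ 0 - θ d) := by
  have hd : 1 ≤ d := Nat.one_le_iff_ne_zero.mpr (by rintro rfl; exact hθ rfl)
  simpa [eigenSum_one hθ] using h.1 1 le_rfl hd

theorem sub_recurrences (hθ : SplitRecurrences d θ θs φ ϕ) (hψ : SplitRecurrences d ψ θs φ ϕ)
    (h0 : θ 0 = ψ 0) (hd : θ d = ψ d) (hθd : θ 0 ≠ θ d) {i : ℕ} (h1 : 1 ≤ i) (hi : i ≤ d) :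
    ϕ 1 * ∑ l ∈ range i, ((θ - ψ) l - (θ - ψ) (d - l))
        + (θs i - θs 0) * (θ 0 - θ d) * (θ - ψ) (i - 1) = 0 ∧
      φ 1 * ∑ l ∈ range i, ((θ - ψ) l - (θ - ψ) (d - l))
        + (θs i - θs 0) * (θ 0 - θ d) * (θ - ψ) (d - i + 1) = 0 := by
  have hS := eigenSum_sub_eigenSum (d := d) (θ := θ) (ψ := ψ) (by rw [h0, hd]) i
  rw [eq_div_iff (sub_ne_zero.mpr hθd)] at hS
  simp only [Pi.sub_apply] at hS ⊢
  constructor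
  · linear_combination (θ 0 - θ d) * (hψ.1 i h1 hi - hθ.1 i h1 hi) - ϕ 1 * hS
      + (θs i - θs 0) * (θ 0 - θ d) * hd
  · linear_combination (θ 0 - θ d) * (hψ.2 i h1 hi - hθ.2 i h1 hi) - φ 1 * hS
      + (θs i - θs 0) * (θ 0 - θ d) * h0

theorem sub_eq_zero_of_forall_lt (hθ : SplitRecurrences d θ θs φ ϕ)
    (hψ : SplitRecurrences d ψ θs φ ϕ) (hθs : ∀ i ≤ d, ∀ j ≤ d, i ≠ j → θs i ≠ θs j)
    (h0 : θ 0 = ψ 0) (hd : θ d = ψ d) (hθd : θ 0 ≠ θ d) {i : ℕ} (hi0 : 1 ≤ i) (hi : i < d)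
    (hprev : ∀ l < i, (θ - ψ) l = 0 ∧ (θ - ψ) (d - l) = 0) :
    (θ - ψ) i = 0 ∧ (θ - ψ) (d - i) = 0 := by
  have hT : ∑ l ∈ range (i + 1), ((θ - ψ) l - (θ - ψ) (d - l)) = (θ - ψ) i - (θ - ψ) (d - i) := by
    rw [sum_range_succ, sum_eq_zero fun l hl => ?_, zero_add]
    obtain ⟨hl, hdl⟩ := hprev l (mem_range.mp hl)
    rw [hl, hdl, sub_zero]
  obtain ⟨ha, hb⟩ := hθ.sub_recurrences hψ h0 hd hθd (Nat.le_add_left 1 i) hi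
  rw [hT, Nat.add_sub_cancel] at ha
  rw [hT, show d - (i + 1) + 1 = d - i by omega] at hb
  set x := (θ - ψ) i
  set y := (θ - ψ) (d - i)
  have hD := sub_ne_zero.mpr hθd
  have hc : θs (i + 1) - θs 0 ≠ 0 := sub_ne_zero.mpr (hθs _ hi _ d.zero_le (by omega))
  have hc' : θs (i + 1) - θs 1 ≠ 0 := sub_ne_zero.mpr (hθs _ hi _ (by omega) (by omega))
  have hxy : x = y := by
    have : (θs (i + 1) - θs 1) * (θ 0 - θ d) * (x - y) = 0 := by
      linear_combination ha - hb + (x - y) * hθ.split_one hθd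
    simpa [hc', hD, sub_eq_zero] using this
  have hy : y = 0 := by
    rw [hxy, sub_self, mul_zero, zero_add] at ha
    simpa [hc, hD] using ha
  exact ⟨hxy.trans hy, hy⟩

theorem eq_of_apply_zero_eq (hθ : SplitRecurrences d θ θs φ ϕ)
    (hψ : SplitRecurrences d ψ θs φ ϕ) (hθs : ∀ i ≤ d, ∀ j ≤ d, i ≠ j → θs i ≠ θs j)
    (hθd : θ 0 ≠ θ d) (hψd : ψ 0 ≠ ψ d) (h0 : θ 0 = ψ 0) : ∀ i ≤ d, θ i = ψ i := by
  have hdd : θ d = ψ d := by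
    have hd : 1 ≤ d := Nat.one_le_iff_ne_zero.mpr (by rintro rfl; exact hθd rfl)
    have h := (hθ.split_one hθd).symm.trans (hψ.split_one hψd)
    rw [add_right_inj, h0] at h
    exact sub_right_injective
      (mul_left_cancel₀ (sub_ne_zero.mpr (hθs 1 hd 0 d.zero_le one_ne_zero)) h)
  have key : ∀ i < d, (θ - ψ) i = 0 ∧ (θ - ψ) (d - i) = 0 := by
    intro i
    induction i using Nat.strong_induction_on with
    | _ i ih =>
      intro hi
      rcases Nat.eq_zero_or_pos i with rfl | hi0
      · simp [h0, hdd]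
      · exact hθ.sub_eq_zero_of_forall_lt hψ hθs h0 hdd hθd hi0 hi
          fun l hl => ih l hl (hl.trans hi)
  intro i hi
  rcases hi.lt_or_eq with hi | rfl
  · exact sub_eq_zero.mp (key i hi).1
  · exact hdd

end SplitRecurrences

end

/-- two parameter arrays with the same dual eigenvalue sequence and
swapped split sequences have eigenvalue sequences related by reversal plus a constant. -/
theorem stmt12 {F : Type*} [Field F] {d : ℕ} (hd : 1 ≤ d)
    (θ θ' θs φ ϕ φ' ϕ' : ℕ → F)
    (hpa : IsParamArray F d θ θs φ ϕ)
    (hpa' : IsParamArray F d θ' θs φ' ϕ')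
    (hφ : ∀ i, 1 ≤ i → i ≤ d → φ' i = ϕ i)
    (hϕ : ∀ i, 1 ≤ i → i ≤ d → ϕ' i = φ i) :
    ∃ ζ : F, ∀ i ≤ d, θ' i = θ (d - i) + ζ := by
  have hθ' := hpa'.splitRecurrences.of_eqOn hφ hϕ
  have hrev := hpa.splitRecurrences.reverse_add (θ' 0 - θ d)
  refine ⟨θ' 0 - θ d, hθ'.eq_of_apply_zero_eq hrev (fun i hi j hj hij => (hpa.1 i hi j hj hij).2)
    (hpa'.apply_zero_ne_apply_diam hd) ?_ (by simp)⟩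
  simp only [Nat.sub_zero, Nat.sub_self, ne_eq, add_left_inj]
  exact (hpa.apply_zero_ne_apply_diam hd).symm
end

section
/- Let A, A* and B, A* be Leonard pairs on V, and set K = A - B. Then the following are equivalent: (i) K commutes with A*; (ii) K lies in the subalgebra generated by A* and (A - K, A*) is a Leonard pair on V; (iii) -K lies in the subalgebra generated by A* and (B - (-K), A*) is a Leonard pair on V. -/
/-!
Since `A*` is irreducible tridiagonal in some basis `b`, the vectors `A*ⁿ b₀` span `V`: the
nonzero subdiagonal entries let one solve `A* bₖ = Σ Mᵢₖ bᵢ` for `bₖ₊₁`. So `b₀` is a cyclic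
vector of `A*`, and the commutant of an endomorphism with a cyclic vector is the algebra it
generates. Hence `K` commutes with `A*` iff `K ∈ F[A*]`, and the Leonard pair conditions hold
for free because `A - K = B` and `B - (-K) = A`.
-/

/-- An irreducible tridiagonal matrix. -/
def IsIrredTridiag {F : Type*} [Field F] {d : ℕ}
    (M : Matrix (Fin (d+1)) (Fin (d+1)) F) : Prop :=
  (∀ i j, (1:ℤ) < |(i.val:ℤ) - (j.val:ℤ)| → M i j = 0) ∧
  (∀ i j, |(i.val:ℤ) - (j.val:ℤ)| = 1 → M i j ≠ 0)

/-- A Leonard pair on a vector space `V` of dimension `d+1`. -/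
def IsLeonardPair {F V : Type*} [Field F] [AddCommGroup V] [Module F V] (d : ℕ)
    (A As : Module.End F V) : Prop :=
  (∃ b : Module.Basis (Fin (d+1)) F V, IsIrredTridiag (LinearMap.toMatrix b b A) ∧
      (LinearMap.toMatrix b b As).IsDiag) ∧
  (∃ b : Module.Basis (Fin (d+1)) F V, IsIrredTridiag (LinearMap.toMatrix b b As) ∧
      (LinearMap.toMatrix b b A).IsDiag)

theorem Module.End.mem_adjoin_of_commute_of_span_range_pow_apply_eq_top
    {R M : Type*} [CommSemiring R] [AddCommMonoid M] [Module R M] {f g : Module.End R M} {v : M}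
    (hv : Submodule.span R (Set.range fun n : ℕ => (f ^ n) v) = ⊤) (hgf : Commute g f) :
    g ∈ Algebra.adjoin R {f} := by
  obtain ⟨c, hc⟩ :=
    Finsupp.mem_span_range_iff_exists_finsupp.mp (hv ▸ Submodule.mem_top (x := g v))
  set p : Module.End R M := c.sum fun n a => a • f ^ n
  have hp : p ∈ Algebra.adjoin R {f} :=
    Subalgebra.sum_mem _ fun n _ =>
      Subalgebra.smul_mem _ (Subalgebra.pow_mem _ (Algebra.self_mem_adjoin_singleton R f) n) _
  have hpv : p v = g v := by
    rw [← hc]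
    simp [p, Finsupp.sum, LinearMap.sum_apply]
  have hpf : Commute p f := (Algebra.commute_of_mem_adjoin_self hp).symm
  suffices g = p from this ▸ hp
  refine LinearMap.ext_on_range hv fun n => ?_
  calc g ((f ^ n) v) = (f ^ n) (p v) := hpv ▸ LinearMap.congr_fun (hgf.pow_right n).eq v
    _ = p ((f ^ n) v) := LinearMap.congr_fun (hpf.pow_right n).eq.symm v

theorem span_range_pow_apply_eq_top_of_isIrredTridiag {F V : Type*} [Field F] [AddCommGroup V]
    [Module F V] {d : ℕ} (b : Module.Basis (Fin (d+1)) F V) {f : Module.End F V}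
    (hf : IsIrredTridiag (LinearMap.toMatrix b b f)) :
    Submodule.span F (Set.range fun n : ℕ => (f ^ n) (b 0)) = ⊤ := by
  set W := Submodule.span F (Set.range fun n : ℕ => (f ^ n) (b 0))
  have hfW : W ≤ W.comap f := Submodule.span_le.mpr <| by
    rintro _ ⟨n, rfl⟩
    exact Submodule.subset_span ⟨n + 1, by simp only [pow_succ', Module.End.mul_apply]⟩
  suffices ∀ n : ℕ, ∀ j : Fin (d+1), j.val ≤ n → b j ∈ W by
    rw [eq_top_iff, ← b.span_eq, Submodule.span_le]
    rintro _ ⟨j, rfl⟩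
    exact this j j le_rfl
  intro n
  induction n with
  | zero =>
    intro j hj
    obtain rfl : j = 0 := Fin.ext (Nat.le_zero.mp hj)
    exact Submodule.subset_span ⟨0, rfl⟩
  | succ n ih =>
    intro j hj
    rcases Nat.lt_or_eq_of_le hj with hlt | hj
    · exact ih j (Nat.lt_succ_iff.mp hlt)
    set M := LinearMap.toMatrix b b f
    obtain ⟨k, hk⟩ : ∃ k : Fin (d+1), k.val = n := ⟨⟨n, by omega⟩, rfl⟩
    have hcol : M j k • b j + ∑ i ∈ Finset.univ.erase j, M i k • b i = f (b k) := by
      rw [Finset.add_sum_erase Finset.univ (fun i => M i k • b i) (Finset.mem_univ j)]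
      simp_rw [M, LinearMap.toMatrix_apply]
      exact b.sum_repr _
    have hrest : ∑ i ∈ Finset.univ.erase j, M i k • b i ∈ W := by
      refine Submodule.sum_mem _ fun i hi => ?_
      by_cases hin : i.val ≤ n
      · exact W.smul_mem _ (ih i hin)
      · have hij : i.val ≠ j.val := fun h => Finset.ne_of_mem_erase hi (Fin.ext h)
        rw [hf.1 i k (by rw [lt_abs]; omega), zero_smul]
        exact W.zero_mem
    have hjk : M j k • b j ∈ W := by
      rw [← add_sub_cancel_right (M j k • b j) (∑ i ∈ Finset.univ.erase j, M i k • b i), hcol]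
      exact W.sub_mem (hfW (ih k hk.le)) hrest
    exact (W.smul_mem_iff (hf.2 j k (by rw [abs_eq zero_le_one]; omega))).mp hjk

theorem stmt13_general {F V : Type*} [Field F] [AddCommGroup V] [Module F V] {d : ℕ}
    (A As B : Module.End F V)
    (hA : IsLeonardPair d A As) (hB : IsLeonardPair d B As)
    (K : Module.End F V) (hK : K = A - B) :
    List.TFAE [
      Commute K As,
      K ∈ Algebra.adjoin F ({As} : Set (Module.End F V)) ∧ IsLeonardPair d (A - K) As,
      (-K) ∈ Algebra.adjoin F ({As} : Set (Module.End F V)) ∧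
        IsLeonardPair d (B - (-K)) As] := by
  obtain ⟨b, hb, -⟩ := hA.2
  have hAK : A - K = B := by rw [hK, sub_sub_cancel]
  have hBK : B - (-K) = A := by rw [hK, sub_neg_eq_add, add_sub_cancel]
  tfae_have 1 → 2 := fun h =>
    ⟨Module.End.mem_adjoin_of_commute_of_span_range_pow_apply_eq_top
      (span_range_pow_apply_eq_top_of_isIrredTridiag b hb) h, hAK ▸ hB⟩
  tfae_have 2 → 3 := fun ⟨hK, _⟩ => ⟨neg_mem hK, hBK ▸ hA⟩
  tfae_have 3 → 1 := fun ⟨hK, _⟩ =>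
    Commute.neg_left_iff.mp (Algebra.commute_of_mem_adjoin_self hK).symm
  tfae_finish

/-- for Leonard pairs A, A* and B, A* on V with K = A - B, the
following are equivalent: K commutes with A*; K is a companion of A, A*;
-K is a companion of B, A*. -/
theorem stmt13 {F V : Type*} [Field F] [AddCommGroup V] [Module F V] {d : ℕ} (hd : 1 ≤ d)
    (A As B : Module.End F V)
    (hA : IsLeonardPair d A As) (hB : IsLeonardPair d B As)
    (K : Module.End F V) (hK : K = A - B) :
    List.TFAE [
      Commute K As,
      K ∈ Algebra.adjoin F ({As} : Set (Module.End F V)) ∧ IsLeonardPair d (A - K) As,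
      (-K) ∈ Algebra.adjoin F ({As} : Set (Module.End F V)) ∧
        IsLeonardPair d (B - (-K)) As] :=
  stmt13_general A As B hA hB K hK
end

section
/- Fix A* = diag(θ*_0, …, θ*_d) with distinct entries, and let Ω be the set of normalized irreducible tridiagonal matrices A in Mat_{d+1}(F) such that A, A* is a Leonard pair on F^{d+1}. For A, B in Ω, the following are equivalent: (i) the Leonard pairs A, A* and B, A* are compatible (i.e., [A, A*] = [B, A*]); (ii) A - B is diagonal; (iii) A_{i-1,i} = B_{i-1,i} for 1 ≤ i ≤ d. -/
/-- A pair of matrices forming a Leonard pair on F^{d+1}: there is a basis (i.e. an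
invertible change-of-basis matrix) in which the first is irreducible tridiagonal and
the second diagonal, and a basis in which the roles are swapped. -/
def IsLeonardPairM {F : Type*} [Field F] {d : ℕ}
    (A As : Matrix (Fin (d+1)) (Fin (d+1)) F) : Prop :=
  (∃ S : Matrix (Fin (d+1)) (Fin (d+1)) F, IsUnit S.det ∧
    IsIrredTridiag (S * A * S⁻¹) ∧ (S * As * S⁻¹).IsDiag) ∧
  (∃ S : Matrix (Fin (d+1)) (Fin (d+1)) F, IsUnit S.det ∧
    IsIrredTridiag (S * As * S⁻¹) ∧ (S * A * S⁻¹).IsDiag)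

/-- Membership in the set Ω: normalized irreducible tridiagonal matrices forming a
Leonard pair with the fixed diagonal matrix `As`. -/
def MemOmega {F : Type*} [Field F] {d : ℕ}
    (As A : Matrix (Fin (d+1)) (Fin (d+1)) F) : Prop :=
  IsIrredTridiag A ∧ (∀ i : Fin d, A i.succ i.castSucc = 1) ∧ IsLeonardPairM A As

/-!
Since `A* = diag θ*`, the `(i, j)` entry of `[M, A*]` is `(θ*_j - θ*_i) M_ij`; as the `θ*_i` are
distinct, `[A, A*] = [B, A*]` says exactly that `A - B` is diagonal. Two normalized tridiagonal
matrices agree off the diagonal as soon as their superdiagonals agree, since their subdiagonals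
are both `1` and all other off-diagonal entries vanish.
-/

open Matrix

namespace Matrix

variable {n R : Type*} [DecidableEq n] [Fintype n]

theorem mul_diagonal_sub_diagonal_mul_apply [CommRing R] (M : Matrix n n R) (θ : n → R)
    (i j : n) : (M * diagonal θ - diagonal θ * M) i j = (θ j - θ i) * M i j := by
  simp only [sub_apply, mul_diagonal, diagonal_mul]
  ring

theorem isDiag_iff_mul_diagonal_sub_diagonal_mul_eq_zero [CommRing R] [NoZeroDivisors R]
    {θ : n → R} (hθ : Function.Injective θ) (M : Matrix n n R) :
    M.IsDiag ↔ M * diagonal θ - diagonal θ * M = 0 := by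
  rw [← Matrix.ext_iff]
  simp only [mul_diagonal_sub_diagonal_mul_apply, zero_apply, mul_eq_zero, sub_eq_zero]
  refine ⟨fun h i j => (eq_or_ne i j).imp (congrArg θ ·.symm) (h ·), fun h i j hij => ?_⟩
  exact (h i j).resolve_left (hij <| hθ · |>.symm)

theorem mul_diagonal_sub_diagonal_mul_eq_iff_isDiag_sub [CommRing R] [NoZeroDivisors R]
    {θ : n → R} (hθ : Function.Injective θ) (M N : Matrix n n R) :
    M * diagonal θ - diagonal θ * M = N * diagonal θ - diagonal θ * N ↔ (M - N).IsDiag := by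
  rw [isDiag_iff_mul_diagonal_sub_diagonal_mul_eq_zero hθ, ← sub_eq_zero]
  convert Iff.rfl using 2
  simp only [sub_mul, mul_sub]
  abel

end Matrix

def IsTridiag {R : Type*} [Zero R] {d : ℕ} (M : Matrix (Fin (d+1)) (Fin (d+1)) R) : Prop :=
  ∀ i j, (1:ℤ) < |(i.val:ℤ) - (j.val:ℤ)| → M i j = 0

theorem IsIrredTridiag.isTridiag {F : Type*} [Field F] {d : ℕ}
    {M : Matrix (Fin (d+1)) (Fin (d+1)) F} (hM : IsIrredTridiag M) : IsTridiag M :=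
  hM.1

theorem Fin.exists_castSucc_eq_and_succ_eq {d : ℕ} {i j : Fin (d+1)} (h : j.val = i.val + 1) :
    ∃ k : Fin d, k.castSucc = i ∧ k.succ = j :=
  ⟨⟨i, by omega⟩, rfl, Fin.ext h.symm⟩

theorem IsTridiag.isDiag_sub_iff {R : Type*} [AddGroup R] {d : ℕ}
    {M N : Matrix (Fin (d+1)) (Fin (d+1)) R} (hM : IsTridiag M) (hN : IsTridiag N)
    (hsub : ∀ k : Fin d, M k.succ k.castSucc = N k.succ k.castSucc) :
    (M - N).IsDiag ↔ ∀ k : Fin d, M k.castSucc k.succ = N k.castSucc k.succ := by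
  simp only [IsDiag, Pairwise, Matrix.sub_apply, sub_eq_zero]
  refine ⟨fun h k => h (Fin.castSucc_lt_succ (i := k)).ne, fun hsup i j hij => ?_⟩
  by_cases hj : j.val = i.val + 1
  · obtain ⟨k, rfl, rfl⟩ := Fin.exists_castSucc_eq_and_succ_eq hj
    exact hsup k
  by_cases hi : i.val = j.val + 1
  · obtain ⟨k, rfl, rfl⟩ := Fin.exists_castSucc_eq_and_succ_eq hi
    exact hsub k
  have hfar : (1:ℤ) < |(i.val:ℤ) - (j.val:ℤ)| := by
    have := Fin.val_ne_of_ne hij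
    rw [lt_abs]
    omega
  rw [hM i j hfar, hN i j hfar]

theorem stmt15_general {F : Type*} [Field F] {d : ℕ}
    (θs : Fin (d+1) → F) (hθs : Function.Injective θs)
    (As : Matrix (Fin (d+1)) (Fin (d+1)) F) (hAs : As = Matrix.diagonal θs)
    (A B : Matrix (Fin (d+1)) (Fin (d+1)) F)
    (hA : MemOmega As A) (hB : MemOmega As B) :
    List.TFAE [
      A * As - As * A = B * As - As * B,
      (A - B).IsDiag,
      ∀ i : Fin d, A i.castSucc i.succ = B i.castSucc i.succ] := by
  subst hAs
  have hsub (k : Fin d) : A k.succ k.castSucc = B k.succ k.castSucc := by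
    rw [hA.2.1 k, hB.2.1 k]
  tfae_have 1 ↔ 2 := mul_diagonal_sub_diagonal_mul_eq_iff_isDiag_sub hθs A B
  tfae_have 2 ↔ 3 := hA.1.isTridiag.isDiag_sub_iff hB.1.isTridiag hsub
  tfae_finish

/-- for A, B ∈ Ω, compatibility ([A,A*] = [B,A*]) is equivalent to A - B
being diagonal, and to equality of the superdiagonal entries. -/
theorem stmt15 {F : Type*} [Field F] {d : ℕ} (hd : 1 ≤ d)
    (θs : Fin (d+1) → F) (hθs : Function.Injective θs)
    (As : Matrix (Fin (d+1)) (Fin (d+1)) F) (hAs : As = Matrix.diagonal θs)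
    (A B : Matrix (Fin (d+1)) (Fin (d+1)) F)
    (hA : MemOmega As A) (hB : MemOmega As B) :
    List.TFAE [
      A * As - As * A = B * As - As * B,
      (A - B).IsDiag,
      ∀ i : Fin d, A i.castSucc i.succ = B i.castSucc i.succ] :=
  stmt15_general θs hθs As hAs A B hA hB
end

section
/- Let A ∈ Ω and let B ∈ Mat_{d+1}(F) be such that B, A* is a Leonard pair on F^{d+1} compatible with A, A*. Then B ∈ Ω; that is, B is normalized irreducible tridiagonal. -/
/-! Compatibility says that `A - B` commutes with `A* = diag θ*`; since the `θ*ᵢ` are distinct,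
`A - B` is diagonal. Hence `B` has the same off-diagonal entries as `A`, and being normalized
irreducible tridiagonal only depends on those. -/

theorem Matrix.isDiag_of_commute_diagonal {n R : Type*} [Fintype n] [DecidableEq n] [CommRing R]
    [NoZeroDivisors R] {θ : n → R} (hθ : Function.Injective θ) {M : Matrix n n R}
    (h : Commute M (diagonal θ)) : M.IsDiag := by
  intro i j hij
  have hij_entry := congrFun₂ h.eq i j
  rw [mul_diagonal, diagonal_mul] at hij_entry
  have hprod : M i j * (θ j - θ i) = 0 := by linear_combination hij_entry
  exact (mul_eq_zero.mp hprod).resolve_right (sub_ne_zero.mpr fun h => hij (hθ h).symm)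

theorem IsIrredTridiag.of_offDiag_eq {F : Type*} [Field F] {d : ℕ}
    {A B : Matrix (Fin (d+1)) (Fin (d+1)) F} (hA : IsIrredTridiag A)
    (hoff : ∀ i j, i ≠ j → B i j = A i j) : IsIrredTridiag B := by
  have hne : ∀ i j : Fin (d+1), (0:ℤ) < |(i.val:ℤ) - (j.val:ℤ)| → i ≠ j := by
    rintro i j h rfl
    simp at h
  exact ⟨fun i j h => hoff i j (hne i j (by omega)) ▸ hA.1 i j h,
    fun i j h => hoff i j (hne i j (by omega)) ▸ hA.2 i j h⟩

theorem stmt16_general {F : Type*} [Field F] {d : ℕ}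
    (θs : Fin (d+1) → F) (hθs : Function.Injective θs)
    (As : Matrix (Fin (d+1)) (Fin (d+1)) F) (hAs : As = Matrix.diagonal θs)
    (A B : Matrix (Fin (d+1)) (Fin (d+1)) F)
    (hA : MemOmega As A)
    (hBLP : IsLeonardPairM B As)
    (hcompat : A * As - As * A = B * As - As * B) :
    MemOmega As B := by
  obtain ⟨hA_tridiag, hA_normalized, -⟩ := hA
  have hcomm : Commute (A - B) As := by
    rw [commute_iff_eq, Matrix.sub_mul, Matrix.mul_sub]
    exact sub_eq_sub_iff_sub_eq_sub.mp hcompat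
  have hdiag : (A - B).IsDiag := Matrix.isDiag_of_commute_diagonal hθs (hAs ▸ hcomm)
  have hoff : ∀ i j, i ≠ j → B i j = A i j := fun i j hij =>
    (sub_eq_zero.mp (hdiag hij)).symm
  refine ⟨hA_tridiag.of_offDiag_eq hoff, fun i => ?_, hBLP⟩
  rw [hoff _ _ (Fin.castSucc_lt_succ (i := i)).ne']
  exact hA_normalized i

/-- if A ∈ Ω and B, A* is a Leonard pair compatible with A, A*, then
B ∈ Ω, i.e. B is normalized irreducible tridiagonal. -/
theorem stmt16 {F : Type*} [Field F] {d : ℕ} (hd : 1 ≤ d)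
    (θs : Fin (d+1) → F) (hθs : Function.Injective θs)
    (As : Matrix (Fin (d+1)) (Fin (d+1)) F) (hAs : As = Matrix.diagonal θs)
    (A B : Matrix (Fin (d+1)) (Fin (d+1)) F)
    (hA : MemOmega As A)
    (hBLP : IsLeonardPairM B As)
    (hcompat : A * As - As * A = B * As - As * B) :
    MemOmega As B :=
  stmt16_general θs hθs As hAs A B hA hBLP hcompat
end

section
/- For A, B in Ω, the Leonard pairs A, A* and B, A* are isomorphic (i.e., there is an algebra isomorphism of End(F^{d+1}) sending A ↦ B and A* ↦ A*) if and only if A = B. -/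
open Matrix Polynomial

theorem Matrix.aeval_diagonal {R n : Type*} [CommSemiring R] [Fintype n] [DecidableEq n]
    (θ : n → R) (p : R[X]) : aeval (diagonal θ) p = diagonal fun i ↦ p.eval (θ i) := by
  rw [← diagonalAlgHom_apply R, aeval_algHom_apply, aeval_pi_apply]
  simp

theorem Matrix.aeval_diagonal_lagrangeBasis {F n : Type*} [Field F] [Fintype n] [DecidableEq n]
    {θ : n → F} (hθ : Function.Injective θ) (i : n) :
    aeval (diagonal θ) (Lagrange.basis Finset.univ θ i) = single i i 1 := by
  rw [aeval_diagonal, ← diagonal_single]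
  congr 1
  ext a
  rcases eq_or_ne i a with rfl | hia
  · simp [Lagrange.eval_basis_self hθ.injOn (Finset.mem_univ _)]
  · simp [Lagrange.eval_basis_of_ne hia (Finset.mem_univ _), hia.symm]

theorem AlgHom.map_single_self_of_map_diagonal {F n : Type*} [Field F] [Fintype n]
    [DecidableEq n] (f : Matrix n n F →ₐ[F] Matrix n n F) {θ : n → F}
    (hθ : Function.Injective θ) (hf : f (diagonal θ) = diagonal θ) (i : n) :
    f (single i i 1) = single i i 1 := by
  rw [← aeval_diagonal_lagrangeBasis hθ, ← aeval_algHom_apply, hf]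

namespace AlgHom

variable {R n : Type*} [CommSemiring R] [Fintype n] [DecidableEq n]
  {f : Matrix n n R →ₐ[R] Matrix n n R}

theorem matrix_apply_eq_mul (hf : ∀ i, f (single i i 1) = single i i 1)
    (M : Matrix n n R) (i j : n) : f M i j = f (single i j 1) i j * M i j := by
  have hcorner (X : Matrix n n R) :
      (single i i 1 * X * single j j 1 : Matrix n n R) i j = X i j := by
    simp
  calc f M i j = f (single i i 1 * M * single j j 1) i j := by
        rw [map_mul, map_mul, hf, hf, hcorner]
    _ = f (M i j • single i j 1) i j := by simp
    _ = f (single i j 1) i j * M i j := by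
        rw [map_smul, Matrix.smul_apply, smul_eq_mul, mul_comm]

theorem map_single_one_eq_single (hf : ∀ i, f (single i i 1) = single i i 1) (i j : n) :
    f (single i j 1) = single i j (f (single i j 1) i j) := by
  ext a b
  rw [matrix_apply_eq_mul hf]
  by_cases h : i = a ∧ j = b
  · obtain ⟨rfl, rfl⟩ := h
    simp
  · simp [single_apply_of_ne (h := h)]

theorem single_apply_mul_single_apply (hf : ∀ i, f (single i i 1) = single i i 1) (i j k : n) :
    f (single i j 1) i j * f (single j k 1) j k = f (single i k 1) i k := by
  have hsplit : single i k (1 : R) = single i j 1 * single j k 1 := by simp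
  rw [hsplit, map_mul, map_single_one_eq_single hf i j, map_single_one_eq_single hf j k]
  simp

end AlgHom

theorem Fin.eq_one_of_mul_eq_of_succ_castSucc_eq_one {M : Type*} [Monoid M] {d : ℕ}
    {c : Fin (d + 1) → Fin (d + 1) → M} (hmul : ∀ i j k, c i j * c j k = c i k)
    (hdiag : ∀ i, c i i = 1) (hsub : ∀ i : Fin d, c i.succ i.castSucc = 1) (i j : Fin (d + 1)) :
    c i j = 1 := by
  have hto0 : ∀ i, c i 0 = 1 := by
    intro i
    induction i using Fin.induction with
    | zero => exact hdiag 0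
    | succ i ih => rw [← hmul _ i.castSucc, hsub, ih, one_mul]
  have hfrom0 : ∀ j, c 0 j = 1 := fun j ↦ by rw [← hdiag j, ← hmul j 0, hto0, one_mul]
  rw [← hmul i 0, hto0, hfrom0, one_mul]

theorem stmt17_general {F : Type*} [Field F] {d : ℕ}
    (θs : Fin (d+1) → F) (hθs : Function.Injective θs)
    (As : Matrix (Fin (d+1)) (Fin (d+1)) F) (hAs : As = Matrix.diagonal θs)
    (A B : Matrix (Fin (d+1)) (Fin (d+1)) F)
    (hA : MemOmega As A) (hB : MemOmega As B) :
    (∃ σ : Matrix (Fin (d+1)) (Fin (d+1)) F ≃ₐ[F] Matrix (Fin (d+1)) (Fin (d+1)) F,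
      σ A = B ∧ σ As = As) ↔ A = B := by
  refine ⟨fun ⟨σ, hσA, hσAs⟩ ↦ ?_, fun h ↦ ⟨AlgEquiv.refl, h, rfl⟩⟩
  set f := (σ : Matrix (Fin (d+1)) (Fin (d+1)) F →ₐ[F] Matrix (Fin (d+1)) (Fin (d+1)) F)
  have hunits : ∀ i, f (single i i 1) = single i i 1 :=
    f.map_single_self_of_map_diagonal hθs (hAs ▸ hσAs)
  have hentries : ∀ i j, B i j = f (single i j 1) i j * A i j := fun i j ↦ by
    rw [← hσA]
    exact f.matrix_apply_eq_mul hunits A i j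
  have hscale : ∀ i j, f (single i j 1) i j = 1 :=
    Fin.eq_one_of_mul_eq_of_succ_castSucc_eq_one (f.single_apply_mul_single_apply hunits)
      (fun i ↦ by simp [hunits])
      fun i ↦ by simpa [hA.2.1 i, hB.2.1 i] using (hentries i.succ i.castSucc).symm
  ext i j
  rw [hentries, hscale, one_mul]

/-- for A, B ∈ Ω, the Leonard pairs A, A* and B, A* are isomorphic
(via an algebra automorphism of the matrix algebra sending A ↦ B, A* ↦ A*)
iff A = B. -/
theorem stmt17 {F : Type*} [Field F] {d : ℕ} (hd : 1 ≤ d)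
    (θs : Fin (d+1) → F) (hθs : Function.Injective θs)
    (As : Matrix (Fin (d+1)) (Fin (d+1)) F) (hAs : As = Matrix.diagonal θs)
    (A B : Matrix (Fin (d+1)) (Fin (d+1)) F)
    (hA : MemOmega As A) (hB : MemOmega As B) :
    (∃ σ : Matrix (Fin (d+1)) (Fin (d+1)) F ≃ₐ[F] Matrix (Fin (d+1)) (Fin (d+1)) F,
      σ A = B ∧ σ As = As) ↔ A = B :=
  stmt17_general θs hθs As hAs A B hA hB
end

section
/- Suppose char(F) = 2 and scalars h, s, s*, r, h', s', r' in F satisfy h ≠ 0, s ≠ 0, s+1 ≠ 0, s* ≠ 0, s*+1 ≠ 0, r ≠ 0, and the analogous nonvanishing conditions for the primed variables, together with: h = h', s(1+s+s*) = s'(1+s'+s*), and r(r+s+ss*) = r'(r'+s'+s's*). Then either (s' = s and (r' = r or r' = r+s+ss*)), or (s' = 1+s+s*, r+r' ≠ 0, and (r+r')/(1+s*) + r'(1+s*)/(r+r') = s). -/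
/-!
In characteristic 2 the map `x ↦ x * (x + c)` is additive, so `a * (a + c) = b * (b + c)` says that
`a + b` is a root of `y * (y + c)`, i.e. `b = a` or `b = a + c`. Applied to the equation in `s` this
gives `s' = s` or `s' = s + (1 + s*)`. In the first case the same argument applies to the equation
in `r`. In the second case the equation in `r` becomes `(r + r')² + r' (1 + s*)² = s (1 + s*) (r + r')`,
and dividing by `(1 + s*)(r + r')` gives the stated identity.
-/

theorem div_add_mul_div_eq_of_sq_add_mul_sq_eq {K : Type*} [Field K] {u v t s : K}
    (ht : t ≠ 0) (hu : u ≠ 0) (h : u ^ 2 + v * t ^ 2 = s * t * u) : u / t + v * t / u = s := by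
  rw [div_add_div _ _ ht hu, div_eq_iff (mul_ne_zero ht hu)]
  linear_combination h

namespace CharTwo

theorem eq_or_eq_add_of_mul_add_eq_mul_add {R : Type*} [CommRing R] [NoZeroDivisors R] [CharP R 2]
    {a b c : R} (h : a * (a + c) = b * (b + c)) : b = a ∨ b = a + c := by
  have hroot : (b + a) * (b + a + c) = 0 := by
    linear_combination -h + (a * (a + c) + a * b) * two_eq_zero (R := R)
  rcases mul_eq_zero.mp hroot with hba | hbac
  · exact Or.inl (CharTwo.add_eq_zero.mp hba)
  · exact Or.inr (by linear_combination hbac - (a + c) * two_eq_zero (R := R))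

theorem add_ne_zero_and_div_add_mul_div_eq {K : Type*} [Field K] [CharP K 2]
    {r r' s t : K} (ht : t ≠ 0) (hr' : r' ≠ 0)
    (h : r * (r + s * t) = r' * (r' + (s + t) * t)) :
    r + r' ≠ 0 ∧ (r + r') / t + r' * t / (r + r') = s := by
  have key : (r + r') ^ 2 + r' * t ^ 2 = s * t * (r + r') := by
    linear_combination h + (r * r' + r' ^ 2 + r' * t ^ 2 - r * s * t) * two_eq_zero (R := K)
  have hrr : r + r' ≠ 0 := by
    intro hzero
    have : r' * t ^ 2 = 0 := by simpa [hzero] using key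
    exact mul_ne_zero hr' (pow_ne_zero 2 ht) this
  exact ⟨hrr, div_add_mul_div_eq_of_sq_add_mul_sq_eq ht hrr key⟩

end CharTwo

/-- `sS` plays the role of s*. -/
theorem stmt19_general {F : Type*} [Field F] [CharP F 2]
    (s sS r s' r' : F)
    (hne6 : sS + 1 ≠ 0)
    (hne7' : r' ≠ 0)
    (e2 : s * (1 + s + sS) = s' * (1 + s' + sS))
    (e3 : r * (r + s + s * sS) = r' * (r' + s' + s' * sS)) :
    (s' = s ∧ (r' = r ∨ r' = r + s + s * sS)) ∨
    (s' = 1 + s + sS ∧ r + r' ≠ 0 ∧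
      (r + r') / (1 + sS) + r' * (1 + sS) / (r + r') = s) := by
  have ht : 1 + sS ≠ 0 := by rwa [add_comm]
  rcases CharTwo.eq_or_eq_add_of_mul_add_eq_mul_add (a := s) (b := s') (c := 1 + sS)
      (by linear_combination e2) with rfl | hs'
  · refine Or.inl ⟨rfl, ?_⟩
    rcases CharTwo.eq_or_eq_add_of_mul_add_eq_mul_add (a := r) (b := r') (c := s' * (1 + sS))
      (by linear_combination e3) with hr' | hr'
    · exact Or.inl hr'
    · exact Or.inr (by linear_combination hr')
  · subst hs'
    refine Or.inr ⟨by ring, CharTwo.add_ne_zero_and_div_add_mul_div_eq ht hne7' ?_⟩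
    linear_combination e3

/-- solutions of the type IV compatibility equations in
characteristic 2 (here `sS` plays the role of s* and `hS` the role of h*). -/
theorem stmt19 {F : Type*} [Field F] [IsAlgClosed F] [CharP F 2]
    (h s sS hS r h' s' r' : F)
    (hne1 : h ≠ 0) (hne2 : s ≠ 0) (hne3 : s + 1 ≠ 0)
    (hne4 : hS ≠ 0) (hne5 : sS ≠ 0) (hne6 : sS + 1 ≠ 0)
    (hne7 : r ≠ 0) (hne8 : r + s + sS ≠ 0)
    (hne9 : r + s + s * sS ≠ 0) (hne10 : r + sS + s * sS ≠ 0)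
    (hne1' : h' ≠ 0) (hne2' : s' ≠ 0) (hne3' : s' + 1 ≠ 0)
    (hne7' : r' ≠ 0) (hne8' : r' + s' + sS ≠ 0)
    (hne9' : r' + s' + s' * sS ≠ 0) (hne10' : r' + sS + s' * sS ≠ 0)
    (e1 : h = h')
    (e2 : s * (1 + s + sS) = s' * (1 + s' + sS))
    (e3 : r * (r + s + s * sS) = r' * (r' + s' + s' * sS)) :
    (s' = s ∧ (r' = r ∨ r' = r + s + s * sS)) ∨
    (s' = 1 + s + sS ∧ r + r' ≠ 0 ∧
      (r + r') / (1 + sS) + r' * (1 + sS) / (r + r') = s) :=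
  stmt19_general s sS r s' r' hne6 hne7' e2 e3
end
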